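/- arXiv:1012.4193 — 2 statements merged into one kernel-verified Lean document; each statement's English description precedes it below -/
import Mathlib

section
/- The three-term formal delta function identity holds: x_0^{-1}\,\delta((x_1 - x_2)/x_0) - x_0^{-1}\,\delta((x_2 - x_1)/(-x_0)) = x_2^{-1}\,\delta((x_1 - x_0)/x_2), as formal series in three commuting formal variables, with all binomials expanded in nonnegative integral powers of the second listed variable. -/
/-!
Every term is supported on the plane `a + b + c = -1`, where at most two of `a, b, c` are
nonnegative. Identifying `zbinom` with `Ring.choose`, upper negation
`(-1)^k * binom(-n-1, k) = binom(n+k, n)` turns the nonzero coefficients into ordinary binomial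
coefficients, and the identity becomes the symmetry `binom(m, k) = binom(m, m-k)`. When only one
of `a, b, c` is nonnegative, the one surviving term vanishes because its upper index is a natural
number smaller than its lower index.
-/

noncomputable def zbinom (n : ℤ) (k : ℕ) : ℂ :=
  (∏ i ∈ Finset.range k, ((n : ℂ) - (i : ℂ))) / (Nat.factorial k : ℂ)

lemma zbinom_eq_ringChoose (n : ℤ) (k : ℕ) : zbinom n k = Ring.choose (n : ℂ) k := by
  rw [Ring.choose_eq_smul, ← Polynomial.aeval_eq_smeval, Polynomial.aeval_def,
    Polynomial.eval₂_eq_eval_map, descPochhammer_map,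
    descPochhammer_eval_eq_prod_range, smul_eq_mul, zbinom, div_eq_inv_mul]

lemma zbinom_natCast (n k : ℕ) : zbinom n k = n.choose k := by
  rw [zbinom_eq_ringChoose, Int.cast_natCast, Ring.choose_natCast]

lemma neg_one_pow_mul_zbinom_neg_sub_one (n k : ℕ) :
    (-1) ^ k * zbinom (-n - 1) k = (n + k).choose n := by
  rw [zbinom_eq_ringChoose, show ((-n - 1 : ℤ) : ℂ) = -((n : ℂ) + 1) by push_cast; ring,
    Ring.choose_neg, Units.smul_def, zsmul_eq_mul, Int.cast_negOnePow_natCast,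
    ← mul_assoc, ← pow_add, Even.neg_one_pow ⟨k, rfl⟩, one_mul,
    show (n : ℂ) + 1 + k - 1 = ((n + k : ℕ) : ℂ) by push_cast; ring, Ring.choose_natCast,
    Nat.choose_symm_add]

lemma zbinom_eq_zero_of_lt {n : ℤ} {k : ℕ} (hn : 0 ≤ n) (hk : n < k) : zbinom n k = 0 := by
  lift n to ℕ using hn
  rw [zbinom_natCast, Nat.choose_eq_zero_of_lt (by omega), Nat.cast_zero]

lemma neg_one_zpow_neg_natCast {α : Type*} [DivisionRing α] (n : ℕ) :
    (-1 : α) ^ (-(n : ℤ)) = (-1) ^ n := by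
  rw [zpow_neg, zpow_natCast, ← inv_pow, inv_neg_one]

lemma three_term_coeff_of_sum_eq_neg_one {a b c : ℤ} (hs : a + b + c = -1) :
    ((if 0 ≤ c then (-1 : ℂ) ^ c.toNat * zbinom (-a - 1) c.toNat else 0) -
      if 0 ≤ b then (-1 : ℂ) ^ (a + b + 1) * zbinom (-a - 1) b.toNat else 0) =
      if 0 ≤ a then (-1 : ℂ) ^ a.toNat * zbinom (-c - 1) a.toNat else 0 := by
  split_ifs with hc hb ha ha hb ha ha
  · omega
  · lift b to ℕ using hb
    lift c to ℕ using hc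
    obtain rfl : a = -(b + c : ℕ) - 1 := by push_cast; omega
    rw [show -(-((b + c : ℕ) : ℤ) - 1) - 1 = (b + c : ℕ) by ring,
      show -((b + c : ℕ) : ℤ) - 1 + b + 1 = -(c : ℤ) by push_cast; ring,
      neg_one_zpow_neg_natCast, zbinom_natCast, zbinom_natCast, Int.toNat_natCast,
      Int.toNat_natCast, Nat.choose_symm_add, sub_self]
  · lift a to ℕ using ha
    lift c to ℕ using hc
    rw [Int.toNat_natCast, Int.toNat_natCast, sub_zero, neg_one_pow_mul_zbinom_neg_sub_one,
      neg_one_pow_mul_zbinom_neg_sub_one, add_comm, Nat.choose_symm_add]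
  · rw [zbinom_eq_zero_of_lt (by omega) (by omega), mul_zero, sub_zero]
  · lift a to ℕ using ha
    lift b to ℕ using hb
    have hsign : (-1 : ℂ) ^ ((a : ℤ) + b + 1) = -((-1) ^ a * (-1) ^ b) := by
      rw [show (a : ℤ) + b + 1 = ((a + b + 1 : ℕ) : ℤ) by push_cast; ring, zpow_natCast,
        pow_succ, pow_add, mul_neg_one]
    rw [show -c - 1 = ((a + b : ℕ) : ℤ) by push_cast; omega, zbinom_natCast, Int.toNat_natCast,
      Int.toNat_natCast, hsign, zero_sub, neg_mul, neg_neg, mul_assoc,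
      neg_one_pow_mul_zbinom_neg_sub_one]
  · rw [zbinom_eq_zero_of_lt (by omega) (by omega), mul_zero, sub_zero]
  · rw [zbinom_eq_zero_of_lt (by omega) (by omega), mul_zero, sub_zero]
  · omega

/-- The three-term delta function identity
`x₀⁻¹ δ((x₁-x₂)/x₀) - x₀⁻¹ δ((x₂-x₁)/(-x₀)) = x₂⁻¹ δ((x₁-x₀)/x₂)`,
stated as an equality of coefficient functions: `t1 a b c`, `t2 a b c`, `t3 a b c` are the
coefficients of `x₀^a x₁^b x₂^c` in the three terms, each expanded by the binomial expansion
convention (nonnegative integral powers of the second listed variable). -/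
theorem stmt_3
    (t1 t2 t3 : ℤ → ℤ → ℤ → ℂ)
    (ht1 : ∀ a b c : ℤ, t1 a b c =
      if 0 ≤ c ∧ b = -a - 1 - c then (-1 : ℂ) ^ c.toNat * zbinom (-a - 1) c.toNat else 0)
    (ht2 : ∀ a b c : ℤ, t2 a b c =
      if 0 ≤ b ∧ c = -a - 1 - b then (-1 : ℂ) ^ (a + b + 1) * zbinom (-a - 1) b.toNat else 0)
    (ht3 : ∀ a b c : ℤ, t3 a b c =
      if 0 ≤ a ∧ b = -c - 1 - a then (-1 : ℂ) ^ a.toNat * zbinom (-c - 1) a.toNat else 0) :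
    (fun a b c => t1 a b c - t2 a b c) = t3 := by
  funext a b c
  rw [ht1, ht2, ht3]
  by_cases hs : a + b + c = -1
  · simp only [eq_true (show b = -a - 1 - c by omega), eq_true (show c = -a - 1 - b by omega),
      eq_true (show b = -c - 1 - a by omega), and_true]
    exact three_term_coeff_of_sum_eq_neg_one hs
  · rw [if_neg (by omega), if_neg (by omega), if_neg (by omega), sub_zero]
end

section
/- L(-1)-derivative property for opposite vertex operators: (d/dx) Y^o_W(v, x) = Y^o_W(L(-1)v, x) for all v \in V. -/
/-!
Both sides are linear in `v`, so it suffices to take `v` homogeneous of weight `k`; then `L(-1)v`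
has weight `k + 1` and, `L(1)` being locally nilpotent, both components are finite sums over `m`.
The sl(2) relations give, on a vector of weight `k`,
`L(1)^{m+1} L(-1) v = L(-1) L(1)^{m+1} v + (m+1)(2k-m) L(1)^m v`,
and together with `Y_W(L(-1)u, x) = (d/dx) Y_W(u, x)` this splits the `m`-th summand of
`(L(-1)v)^o_n` into a multiple `(2k - n - m)` of the `m`-th summand of `v^o_{n-1}` plus a multiple
`(m - 1 - 2k)` of the `(m-1)`-st one. Regrouping by `m`, the coefficients add up to `-n`.
-/

open Finset

theorem Finset.sum_range_succ_eq_of_shift {M : Type*} [AddCommMonoid M] {A F G : ℕ → M} {N : ℕ}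
    (h0 : A 0 = F 0) (hs : ∀ j, A (j + 1) = F (j + 1) + G j) (hN : G N = 0) :
    ∑ m ∈ range (N + 1), A m = ∑ m ∈ range (N + 1), (F m + G m) := by
  rw [sum_range_succ', sum_add_distrib, sum_range_succ G, hN, add_zero, sum_range_succ' F, h0,
    add_right_comm, ← sum_add_distrib]
  simp only [hs]

section SL2

variable {R M : Type*} [CommRing R] [AddCommGroup M] [Module R M] {L : ℤ → Module.End R M}
  {v : M} {k : R}

theorem apply_pow_one_of_weight (h01 : L 0 * L 1 - L 1 * L 0 = -L 1) (hv : L 0 v = k • v)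
    (m : ℕ) : L 0 ((L 1 ^ m) v) = (k - m) • (L 1 ^ m) v := by
  have hL01 : ∀ x, L 0 (L 1 x) = L 1 (L 0 x) - L 1 x := fun x => by
    rw [sub_eq_add_neg]
    exact eq_add_of_sub_eq' (congrArg (fun E : Module.End R M => E x) h01)
  induction m with
  | zero => simpa using hv
  | succ m ih =>
    rw [pow_succ', Module.End.mul_apply, hL01, ih, map_smul]
    push_cast
    module

theorem pow_succ_apply_neg_one_of_weight (h01 : L 0 * L 1 - L 1 * L 0 = -L 1)
    (h1 : L (-1) * L 1 - L 1 * L (-1) = -((2 : R) • L 0)) (hv : L 0 v = k • v) (j : ℕ) :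
    (L 1 ^ (j + 1)) (L (-1) v)
      = L (-1) ((L 1 ^ (j + 1)) v) + ((j + 1) * (2 * k - j) : R) • (L 1 ^ j) v := by
  have hL1 : ∀ x, L 1 (L (-1) x) = L (-1) (L 1 x) + (2 : R) • L 0 x := fun x =>
    eq_add_of_sub_eq' (by
      simpa [neg_sub] using congrArg Neg.neg (congrArg (fun E : Module.End R M => E x) h1))
  induction j with
  | zero => simpa [hv, smul_smul] using hL1 v
  | succ j ih =>
    have hpow : ∀ i x, L 1 ((L 1 ^ i) x) = (L 1 ^ (i + 1)) x := fun i x => by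
      rw [pow_succ', Module.End.mul_apply]
    rw [← hpow, ih, map_add, map_smul, hL1, apply_pow_one_of_weight h01 hv, hpow, hpow]
    push_cast
    module

end SL2

section Opposite

variable {K V W : Type*} [Field K] [AddCommGroup V] [Module K V] [AddCommGroup W] [Module K W]
  (LV : ℤ → Module.End K V) (YW : V →ₗ[K] ℤ → Module.End K W)

/-- For `v` of weight `k`, `e^{xL(1)}(-x^{-2})^{L(0)} v = ∑ₘ (-1)^k x^{m-2k} L(1)^m v / m!`, and the
mode `YW u p` carries `x^{p+1}` in `Y_W(u, x^{-1})`; collecting `x^{-n-1}` gives these summands of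
`v^o_n`. -/
def oppositeTerm (k : ℤ) (v : V) (n : ℤ) (m : ℕ) : Module.End K W :=
  ((-1 : K) ^ k * (m.factorial : K)⁻¹) • YW ((LV 1 ^ m) v) (-n - m - 2 + 2 * k)

variable {LV YW}

theorem finsum_oppositeTerm_apply {k : ℤ} {v : V} {N : ℕ} (hN : (LV 1 ^ N) v = 0) (n : ℤ)
    (w : W) :
    ∑ᶠ m, oppositeTerm LV YW k v n m w = (∑ m ∈ range N, oppositeTerm LV YW k v n m) w := by
  rw [LinearMap.sum_apply]
  refine finsum_eq_sum_of_support_subset _ fun m hm => ?_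
  by_contra hmN
  simp only [coe_range, Set.mem_Iio, not_lt] at hmN
  simp [oppositeTerm, Module.End.pow_map_zero_of_le hmN hN] at hm

theorem neg_one_zpow_add_one (k : ℤ) : (-1 : K) ^ (k + 1) = -(-1) ^ k := by
  rw [zpow_add_one₀ (neg_ne_zero.2 one_ne_zero), mul_neg_one]

theorem oppositeTerm_neg_one_zero
    (hderiv : ∀ (v : V) (n : ℤ), YW (LV (-1) v) n = (-(n : K)) • YW v (n - 1))
    (k : ℤ) (v : V) (n : ℤ) :
    oppositeTerm LV YW (k + 1) (LV (-1) v) n 0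
      = (2 * k - (n : K)) • oppositeTerm LV YW k v (n - 1) 0 := by
  simp only [oppositeTerm, pow_zero, Module.End.one_apply, hderiv, smul_smul]
  congr 1
  · push_cast
    rw [neg_one_zpow_add_one]
    ring
  · exact congrArg _ (by omega)

theorem oppositeTerm_neg_one_succ [CharZero K] (h01 : LV 0 * LV 1 - LV 1 * LV 0 = -LV 1)
    (h1 : LV (-1) * LV 1 - LV 1 * LV (-1) = -((2 : K) • LV 0))
    (hderiv : ∀ (v : V) (n : ℤ), YW (LV (-1) v) n = (-(n : K)) • YW v (n - 1))
    {k : ℤ} {v : V} (hv : LV 0 v = (k : K) • v) (n : ℤ) (j : ℕ) :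
    oppositeTerm LV YW (k + 1) (LV (-1) v) n (j + 1)
      = (2 * k - n - (j + 1 : ℕ) : K) • oppositeTerm LV YW k v (n - 1) (j + 1)
        + ((j : K) - 2 * k) • oppositeTerm LV YW k v (n - 1) j := by
  simp only [oppositeTerm, pow_succ_apply_neg_one_of_weight h01 h1 hv, map_add, map_smul,
    Pi.add_apply, Pi.smul_apply, hderiv, smul_add, smul_smul]
  rw [neg_one_zpow_add_one, Nat.factorial_succ]
  congr 1
  · congr 1
    · push_cast; ring
    · exact congrArg _ (by omega)
  · congr 1
    · push_cast
      field_simp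
      ring
    · exact congrArg _ (by omega)

theorem sum_oppositeTerm_neg_one [CharZero K] (h01 : LV 0 * LV 1 - LV 1 * LV 0 = -LV 1)
    (h1 : LV (-1) * LV 1 - LV 1 * LV (-1) = -((2 : K) • LV 0))
    (hderiv : ∀ (v : V) (n : ℤ), YW (LV (-1) v) n = (-(n : K)) • YW v (n - 1))
    {k : ℤ} {v : V} (hv : LV 0 v = (k : K) • v) {N : ℕ} (hN : (LV 1 ^ N) v = 0) (n : ℤ) :
    ∑ m ∈ range (N + 1), oppositeTerm LV YW (k + 1) (LV (-1) v) n m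
      = (-(n : K)) • ∑ m ∈ range (N + 1), oppositeTerm LV YW k v (n - 1) m := by
  have h0 : oppositeTerm LV YW (k + 1) (LV (-1) v) n 0
      = (2 * k - n - (0 : ℕ) : K) • oppositeTerm LV YW k v (n - 1) 0 := by
    rw [oppositeTerm_neg_one_zero hderiv, Nat.cast_zero, sub_zero]
  have hG : ((N : K) - 2 * k) • oppositeTerm LV YW k v (n - 1) N = 0 := by
    simp [oppositeTerm, hN]
  rw [sum_range_succ_eq_of_shift
    (F := fun m : ℕ => (2 * k - n - m : K) • oppositeTerm LV YW k v (n - 1) m)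
    (G := fun j : ℕ => ((j : K) - 2 * k) • oppositeTerm LV YW k v (n - 1) j)
    h0 (oppositeTerm_neg_one_succ h01 h1 hderiv hv n) hG, smul_sum]
  refine sum_congr rfl fun m _ => ?_
  rw [← add_smul]
  congr 1
  ring

end Opposite

theorem stmt_16_general (V W : Type*) [AddCommGroup V] [Module ℂ V] [AddCommGroup W] [Module ℂ W]
    (gradeV : ℤ → Submodule ℂ V)
    (hVsup : (⨆ k : ℤ, gradeV k) = ⊤)
    (LV : ℤ → Module.End ℂ V)
    (hLVshift : ∀ j : ℤ, (j = -1 ∨ j = 0 ∨ j = 1) → ∀ (k : ℤ) (v : V),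
      v ∈ gradeV k → LV j v ∈ gradeV (k - j))
    (hLV0 : ∀ (k : ℤ) (v : V), v ∈ gradeV k → LV 0 v = (k : ℂ) • v)
    (hsl2b : LV 0 * LV 1 - LV 1 * LV 0 = - LV 1)
    (hsl2c : LV (-1) * LV 1 - LV 1 * LV (-1) = - ((2 : ℂ) • LV 0))
    (hnil : ∀ v : V, ∃ m : ℕ, (LV 1 ^ m) v = 0)
    (YW : V →ₗ[ℂ] ℤ → Module.End ℂ W)
    (hderivW : ∀ (v : V) (n : ℤ), YW (LV (-1) v) n = (-(n : ℂ)) • YW v (n - 1))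
    (vo : V →ₗ[ℂ] ℤ → Module.End ℂ W)
    (hvo : ∀ (k : ℤ) (v : V), v ∈ gradeV k → ∀ (n : ℤ) (w : W),
      vo v n w = ∑ᶠ m : ℕ,
        (((-1 : ℂ) ^ k) * ((Nat.factorial m : ℂ))⁻¹) •
          YW ((LV 1 ^ m) v) (-n - (m : ℤ) - 2 + 2 * k) w) :
    ∀ (v : V) (n : ℤ), vo (LV (-1) v) n = (-(n : ℂ)) • vo v (n - 1) := by
  have vo_eq_sum : ∀ k, ∀ v ∈ gradeV k, ∀ N, (LV 1 ^ N) v = 0 →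
      ∀ n, vo v n = ∑ m ∈ range N, oppositeTerm LV YW k v n m :=
    fun k v hv N hN n => LinearMap.ext fun w => (hvo k v hv n w).trans
      (finsum_oppositeTerm_apply hN n w)
  intro v n
  refine Submodule.iSup_induction gradeV
    (motive := fun v => ∀ n : ℤ, vo (LV (-1) v) n = (-(n : ℂ)) • vo v (n - 1))
    (hVsup ▸ Submodule.mem_top) ?_ (fun n => by simp) ?_ n
  · intro k v hv n
    obtain ⟨M, hM⟩ := hnil v
    obtain ⟨M', hM'⟩ := hnil (LV (-1) v)
    have hvk : LV (-1) v ∈ gradeV (k + 1) := by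
      simpa using hLVshift (-1) (Or.inl rfl) k v hv
    rw [vo_eq_sum (k + 1) _ hvk (M + M' + 1) (Module.End.pow_map_zero_of_le (by omega) hM') n,
      vo_eq_sum k v hv (M + M' + 1) (Module.End.pow_map_zero_of_le (by omega) hM) (n - 1),
      sum_oppositeTerm_neg_one hsl2b hsl2c hderivW (hLV0 k v hv)
        (Module.End.pow_map_zero_of_le (by omega) hM)]
  · intro x y hx hy n
    simp only [map_add, Pi.add_apply, hx n, hy n, smul_add]

/-- `L(-1)`-derivative property for opposite vertex operators:
`(d/dx) Y^o_W(v,x) = Y^o_W(L(-1)v, x)`, in component form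
`(L(-1)v)^o_n = -n • v^o_{n-1}` for all `v ∈ V`, `n ∈ ℤ`, where
`Y^o_W(v,x) = Y_W(e^{xL(1)}(-x^{-2})^{L(0)} v, x^{-1}) = ∑ v^o_n x^{-n-1}` is encoded by its
components `vo v n`. -/
theorem stmt_16 (V W : Type*) [AddCommGroup V] [Module ℂ V] [AddCommGroup W] [Module ℂ W]
    (gradeV : ℤ → Submodule ℂ V)
    (hVsup : (⨆ k : ℤ, gradeV k) = ⊤)
    (LV : ℤ → Module.End ℂ V)
    (hLVshift : ∀ j : ℤ, (j = -1 ∨ j = 0 ∨ j = 1) → ∀ (k : ℤ) (v : V),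
      v ∈ gradeV k → LV j v ∈ gradeV (k - j))
    (hLV0 : ∀ (k : ℤ) (v : V), v ∈ gradeV k → LV 0 v = (k : ℂ) • v)
    (hsl2a : LV 0 * LV (-1) - LV (-1) * LV 0 = LV (-1))
    (hsl2b : LV 0 * LV 1 - LV 1 * LV 0 = - LV 1)
    (hsl2c : LV (-1) * LV 1 - LV 1 * LV (-1) = - ((2 : ℂ) • LV 0))
    (hnil : ∀ v : V, ∃ m : ℕ, (LV 1 ^ m) v = 0)
    (YW : V →ₗ[ℂ] ℤ → Module.End ℂ W)
    (LW : ℤ → Module.End ℂ W)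
    (hbracket : ∀ j : ℤ, (j = -1 ∨ j = 0 ∨ j = 1) → ∀ (v : V) (n : ℤ),
      LW j * YW v n - YW v n * LW j
        = ∑ kk ∈ Finset.range (j + 2).toNat,
            (((j + 1).toNat.choose kk : ℂ)) • YW (LV (j - (kk : ℤ)) v) (n + (kk : ℤ)))
    (hderivW : ∀ (v : V) (n : ℤ), YW (LV (-1) v) n = (-(n : ℂ)) • YW v (n - 1))
    (vo : V →ₗ[ℂ] ℤ → Module.End ℂ W)
    (hvo : ∀ (k : ℤ) (v : V), v ∈ gradeV k → ∀ (n : ℤ) (w : W),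
      vo v n w = ∑ᶠ m : ℕ,
        (((-1 : ℂ) ^ k) * ((Nat.factorial m : ℂ))⁻¹) •
          YW ((LV 1 ^ m) v) (-n - (m : ℤ) - 2 + 2 * k) w) :
    ∀ (v : V) (n : ℤ), vo (LV (-1) v) n = (-(n : ℂ)) • vo v (n - 1) :=
  stmt_16_general V W gradeV hVsup LV hLVshift hLV0 hsl2b hsl2c hnil YW hderivW vo hvo
end
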